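/- For every constant c₀ ∈ [0,1) there exists a constant C = C(c₀) > 0 such that the following holds. Let P = U_P S_P U_Pᵀ ∈ ℝ^{n×n} be a rank-d positive semidefinite matrix as in the context, let M ∈ ℝ^{n×n} be symmetric with ‖M − P‖ ≤ c₀ λ_d(P), and let S_M = diag(λ_1(M),…,λ_d(M)) be the diagonal matrix of the d largest eigenvalues of M (all positive by Weyl's inequality). Then for every orthogonal matrix V ∈ ℝ^{d×d}: (i) ‖V S_M^{1/2} − S_P^{1/2} V‖_F ≤ C ‖V S_M − S_P V‖_F / λ_d(P)^{1/2}, and (ii) ‖V S_M^{-1/2} − S_P^{-1/2} V‖_F ≤ C ‖V S_M − S_P V‖_F / λ_d(P)^{3/2}. -/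

import Mathlib

open Matrix
open scoped BigOperators

/-- The Frobenius norm of a real matrix. -/
noncomputable def frobNorm {m n : ℕ} (M : Matrix (Fin m) (Fin n) ℝ) : ℝ :=
  Real.sqrt (∑ i, ∑ j, (M i j) ^ 2)

/-- The spectral (ℓ2 operator) norm of a real square matrix. -/
noncomputable def specNorm {n : ℕ} (M : Matrix (Fin n) (Fin n) ℝ) : ℝ :=
  ‖Matrix.toEuclideanCLM (𝕜 := ℝ) M‖

/-!
By Weyl's inequality (a Courant–Fischer test vector in the range of `U_P`), the top `d`
eigenvalues of `M` are at least `(1 - c₀) λ_d(P)`. The `(i, j)` entry of `V f(S_M) - f(S_P) V` is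
`V i j * (f (μ j) - f (λ i))`, and on `[(1 - c₀) λ_d, ∞)` the functions `√·` and `(√·)⁻¹` are
Lipschitz with constants of order `λ_d^{-1/2}` and `λ_d^{-3/2}`. An entrywise bound passes to the
Frobenius norm.
-/

lemma abs_sqrt_sub_sqrt_le {a b ε : ℝ} (hε : 0 < ε) (ha : ε ≤ a) (hb : 0 ≤ b) :
    |√a - √b| ≤ |a - b| / √ε := by
  have hsum : √ε ≤ √a + √b := (Real.sqrt_le_sqrt ha).trans (le_add_of_nonneg_right (by positivity))
  have hprod : (√a - √b) * (√a + √b) = a - b := by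
    nlinarith [Real.sq_sqrt (hε.le.trans ha), Real.sq_sqrt hb]
  rw [le_div_iff₀ (Real.sqrt_pos.mpr hε), ← hprod, abs_mul,
    abs_of_nonneg (by positivity : 0 ≤ √a + √b)]
  gcongr

lemma abs_inv_sqrt_sub_inv_sqrt_le {a b δ ε : ℝ} (hδ : 0 < δ) (hε : 0 < ε) (ha : δ ≤ a)
    (hb : ε ≤ b) : |(√a)⁻¹ - (√b)⁻¹| ≤ |a - b| / (√δ * ε) := by
  have hsa : 0 < √a := Real.sqrt_pos.mpr (hδ.trans_le ha)
  have hsb : 0 < √b := Real.sqrt_pos.mpr (hε.trans_le hb)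
  calc |(√a)⁻¹ - (√b)⁻¹| = |√b - √a| / (√a * √b) := by
        rw [inv_sub_inv hsa.ne' hsb.ne', abs_div, abs_of_pos (mul_pos hsa hsb)]
    _ ≤ |b - a| / √ε / (√δ * √ε) := by
        gcongr
        exact abs_sqrt_sub_sqrt_le hε hb (hδ.le.trans ha)
    _ = |a - b| / (√δ * ε) := by
        rw [abs_sub_comm, div_div, mul_comm √ε, mul_assoc, Real.mul_self_sqrt hε.le]

lemma frobNorm_le_of_abs_le {m n : ℕ} {A B : Matrix (Fin m) (Fin n) ℝ} {c : ℝ} (hc : 0 ≤ c)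
    (h : ∀ i j, |A i j| ≤ c * |B i j|) : frobNorm A ≤ c * frobNorm B := by
  rw [frobNorm, frobNorm, ← Real.sqrt_sq hc, ← Real.sqrt_mul (sq_nonneg c), Finset.mul_sum]
  gcongr with i _
  rw [Finset.mul_sum]
  gcongr with j _
  rw [← sq_abs, ← sq_abs (B i j), ← mul_pow]
  exact pow_le_pow_left₀ (abs_nonneg _) (h i j) 2

lemma frobNorm_mul_diagonal_sub_diagonal_mul_le {m n : ℕ} (V : Matrix (Fin m) (Fin n) ℝ)
    {a a' : Fin n → ℝ} {b b' : Fin m → ℝ} {c : ℝ} (hc : 0 ≤ c)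
    (h : ∀ i j, |a' j - b' i| ≤ c * |a j - b i|) :
    frobNorm (V * diagonal a' - diagonal b' * V) ≤
      c * frobNorm (V * diagonal a - diagonal b * V) := by
  refine frobNorm_le_of_abs_le hc fun i j => ?_
  have hentry : ∀ (f : Fin n → ℝ) (g : Fin m → ℝ),
      (V * diagonal f - diagonal g * V) i j = V i j * (f j - g i) := fun f g => by
    simp only [Matrix.sub_apply, mul_diagonal, diagonal_mul]
    ring
  rw [hentry, hentry, abs_mul, abs_mul, mul_left_comm]
  exact mul_le_mul_of_nonneg_left (h i j) (abs_nonneg _)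

lemma dotProduct_mul_mul_transpose_mulVec {m n : Type*} [Fintype m] [Fintype n]
    (B : Matrix m n ℝ) (A : Matrix n n ℝ) (x : m → ℝ) :
    x ⬝ᵥ (B * A * Bᵀ) *ᵥ x = (Bᵀ *ᵥ x) ⬝ᵥ A *ᵥ (Bᵀ *ᵥ x) := by
  rw [← mulVec_mulVec, ← mulVec_mulVec, dotProduct_mulVec x B, mulVec_transpose]

lemma mulVec_dotProduct_mulVec_self {m n : Type*} [Fintype m] [Fintype n] [DecidableEq n]
    {B : Matrix m n ℝ} (hB : Bᵀ * B = 1) (y : n → ℝ) : (B *ᵥ y) ⬝ᵥ (B *ᵥ y) = y ⬝ᵥ y := by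
  rw [dotProduct_mulVec, ← mulVec_transpose, mulVec_mulVec, hB, one_mulVec]

lemma abs_dotProduct_mulVec_le_specNorm {n : ℕ} (A : Matrix (Fin n) (Fin n) ℝ) (x : Fin n → ℝ) :
    |x ⬝ᵥ A *ᵥ x| ≤ specNorm A * (x ⬝ᵥ x) := by
  set e : EuclideanSpace ℝ (Fin n) := WithLp.toLp 2 x
  have hquad : x ⬝ᵥ A *ᵥ x = inner ℝ e (toEuclideanCLM (𝕜 := ℝ) A e) := by
    simp [e, toEuclideanCLM_toLp, EuclideanSpace.inner_eq_star_dotProduct, dotProduct_comm]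
  have hnorm : x ⬝ᵥ x = ‖e‖ ^ 2 := by
    rw [EuclideanSpace.norm_eq, Real.sq_sqrt (by positivity)]
    simp [e, dotProduct, sq]
  rw [hquad, hnorm, specNorm]
  calc |inner ℝ e (toEuclideanCLM (𝕜 := ℝ) A e)| ≤ ‖e‖ * ‖toEuclideanCLM (𝕜 := ℝ) A e‖ :=
        abs_real_inner_le_norm _ _
    _ ≤ ‖e‖ * (‖toEuclideanCLM (𝕜 := ℝ) A‖ * ‖e‖) := by
        gcongr
        exact (toEuclideanCLM (𝕜 := ℝ) A).le_opNorm e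
    _ = ‖toEuclideanCLM (𝕜 := ℝ) A‖ * ‖e‖ ^ 2 := by ring

lemma mul_dotProduct_self_le_dotProduct_diagonal_mulVec {ι : Type*} [Fintype ι] [DecidableEq ι]
    {lam : ι → ℝ} {ε : ℝ} (hlam : ∀ k, ε ≤ lam k) (y : ι → ℝ) :
    ε * (y ⬝ᵥ y) ≤ y ⬝ᵥ diagonal lam *ᵥ y := by
  simp only [dotProduct, mulVec_diagonal, Finset.mul_sum]
  refine Finset.sum_le_sum fun k _ => ?_
  nlinarith [hlam k, mul_self_nonneg (y k)]

lemma dotProduct_diagonal_mulVec_le {ι : Type*} [Fintype ι] [DecidableEq ι] [Preorder ι]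
    {mu : ι → ℝ} (hmu : Antitone mu) {j₀ : ι} {z : ι → ℝ} (hz : ∀ j, ¬ j₀ ≤ j → z j = 0) :
    z ⬝ᵥ diagonal mu *ᵥ z ≤ mu j₀ * (z ⬝ᵥ z) := by
  simp only [dotProduct, mulVec_diagonal, Finset.mul_sum]
  refine Finset.sum_le_sum fun j _ => ?_
  by_cases hj : j₀ ≤ j
  · nlinarith [hmu hj, mul_self_nonneg (z j)]
  · simp [hz j hj]

lemma exists_ne_zero_mulVec_eq_zero_of_card_lt {K m n : Type*} [Field K] [Fintype m] [Fintype n]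
    (B : Matrix m n K) (h : Fintype.card m < Fintype.card n) : ∃ y ≠ 0, B *ᵥ y = 0 := by
  obtain ⟨y, hy, hy0⟩ := Submodule.exists_mem_ne_zero_of_ne_bot
    (LinearMap.ker_ne_bot_of_finrank_lt (f := B.mulVecLin) (by simpa using h))
  exact ⟨y, hy0, hy⟩

theorem sub_le_eigenvalue_of_specNorm_sub_le {n d : ℕ} (hdn : d ≤ n)
    {U : Matrix (Fin n) (Fin d) ℝ} (hU : Uᵀ * U = 1) {lam : Fin d → ℝ} {ε : ℝ}
    (hlam : ∀ k, ε ≤ lam k) {W : Matrix (Fin n) (Fin n) ℝ} (hW : Wᵀ * W = 1) {mu : Fin n → ℝ}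
    (hmu : Antitone mu) {δ : ℝ}
    (hMP : specNorm (W * diagonal mu * Wᵀ - U * diagonal lam * Uᵀ) ≤ δ) (k : Fin d) :
    ε - δ ≤ mu (Fin.castLE hdn k) := by
  have hd : 0 < d := k.pos
  set j₀ : Fin n := ⟨d - 1, by omega⟩
  suffices ε - δ ≤ mu j₀ from
    this.trans (hmu (by simp only [Fin.le_def, Fin.val_castLE, j₀]; omega))
  -- a nonzero vector in the range of `U` orthogonal to the first `d - 1` eigenvectors of `M`
  obtain ⟨y, hy0, hker⟩ := exists_ne_zero_mulVec_eq_zero_of_card_lt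
    ((Wᵀ * U).submatrix (Fin.castLE (by omega : d - 1 ≤ n)) id) (by simp; omega)
  set x := U *ᵥ y
  have hz : ∀ j, ¬ j₀ ≤ j → (Wᵀ *ᵥ x) j = 0 := fun j hj => by
    have hj : (j : ℕ) < d - 1 := by simp only [Fin.le_def, j₀, not_le] at hj; exact hj
    rw [mulVec_mulVec]
    exact congrFun hker ⟨j, hj⟩
  have hWW : Wᵀᵀ * Wᵀ = 1 := by rw [transpose_transpose]; exact mul_eq_one_comm.mp hW
  have hxx : x ⬝ᵥ x = y ⬝ᵥ y := mulVec_dotProduct_mulVec_self hU y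
  have hpos : 0 < y ⬝ᵥ y := by simpa using dotProduct_self_star_pos_iff.mpr hy0
  have hP : ε * (y ⬝ᵥ y) ≤ x ⬝ᵥ (U * diagonal lam * Uᵀ) *ᵥ x := by
    rw [dotProduct_mul_mul_transpose_mulVec, mulVec_mulVec, hU, one_mulVec]
    exact mul_dotProduct_self_le_dotProduct_diagonal_mulVec hlam y
  have hM : x ⬝ᵥ (W * diagonal mu * Wᵀ) *ᵥ x ≤ mu j₀ * (y ⬝ᵥ y) := by
    rw [dotProduct_mul_mul_transpose_mulVec, ← hxx, ← mulVec_dotProduct_mulVec_self hWW x]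
    exact dotProduct_diagonal_mulVec_le hmu hz
  have hE := (abs_le.mp ((abs_dotProduct_mulVec_le_specNorm _ x).trans
    (mul_le_mul_of_nonneg_right hMP (hxx ▸ hpos.le)))).1
  rw [sub_mulVec, dotProduct_sub, hxx] at hE
  nlinarith

theorem stmt7_general (c₀ : ℝ) (hc₀1 : c₀ < 1) :
    ∃ C : ℝ, 0 < C ∧
      ∀ (n d : ℕ) (hd : 0 < d) (hdn : d ≤ n)
        (UP : Matrix (Fin n) (Fin d) ℝ) (lam : Fin d → ℝ),
        UPᵀ * UP = 1 → (∀ k, 0 < lam k) → (∀ k l : Fin d, k ≤ l → lam l ≤ lam k) →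
      ∀ lamd : ℝ, lamd = lam ⟨d - 1, Nat.sub_lt hd Nat.one_pos⟩ →
      ∀ P M : Matrix (Fin n) (Fin n) ℝ,
        P = UP * Matrix.diagonal lam * UPᵀ → Mᵀ = M →
        specNorm (M - P) ≤ c₀ * lamd →
      ∀ (W : Matrix (Fin n) (Fin n) ℝ) (mu : Fin n → ℝ),
        Wᵀ * W = 1 → (∀ k l : Fin n, k ≤ l → mu l ≤ mu k) →
        M = W * Matrix.diagonal mu * Wᵀ →
      ∀ V : Matrix (Fin d) (Fin d) ℝ, Vᵀ * V = 1 →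
        frobNorm (V * Matrix.diagonal
              (fun k : Fin d => Real.sqrt (mu (Fin.castLE hdn k)))
            - Matrix.diagonal (fun k => Real.sqrt (lam k)) * V)
          ≤ C * frobNorm (V * Matrix.diagonal (fun k : Fin d => mu (Fin.castLE hdn k))
              - Matrix.diagonal lam * V) / Real.sqrt lamd
        ∧
        frobNorm (V * Matrix.diagonal
              (fun k : Fin d => (Real.sqrt (mu (Fin.castLE hdn k)))⁻¹)
            - Matrix.diagonal (fun k => (Real.sqrt (lam k))⁻¹) * V)
          ≤ C * frobNorm (V * Matrix.diagonal (fun k : Fin d => mu (Fin.castLE hdn k))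
              - Matrix.diagonal lam * V) / (lamd * Real.sqrt lamd) := by
  have ht : 0 < 1 - c₀ := by linarith
  refine ⟨(√(1 - c₀))⁻¹, by positivity, ?_⟩
  intro n d hd hdn UP lam hUP hlam hlam_anti lamd hlamd P M hP _ hMP W mu hW hmu_anti hM V _
  have hlamd_pos : 0 < lamd := hlamd ▸ hlam _
  have hlam_ge : ∀ k, lamd ≤ lam k := fun k =>
    hlamd ▸ hlam_anti _ _ (by simp only [Fin.le_def]; omega)
  have hmu_ge : ∀ k, (1 - c₀) * lamd ≤ mu (Fin.castLE hdn k) := fun k => by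
    have := sub_le_eigenvalue_of_specNorm_sub_le hdn hUP hlam_ge hW (fun _ _ h => hmu_anti _ _ h)
      (hM ▸ hP ▸ hMP) k
    linarith
  have hδ : 0 < (1 - c₀) * lamd := by positivity
  have hsqrt : √((1 - c₀) * lamd) = √(1 - c₀) * √lamd := Real.sqrt_mul ht.le _
  constructor
  · rw [mul_div_right_comm]
    refine frobNorm_mul_diagonal_sub_diagonal_mul_le V (by positivity) fun i j => ?_
    calc _ ≤ |mu (Fin.castLE hdn j) - lam i| / √((1 - c₀) * lamd) :=
          abs_sqrt_sub_sqrt_le hδ (hmu_ge j) (hlam i).le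
      _ = _ := by rw [hsqrt]; field_simp
  · rw [mul_div_right_comm]
    refine frobNorm_mul_diagonal_sub_diagonal_mul_le V (by positivity) fun i j => ?_
    calc _ ≤ |mu (Fin.castLE hdn j) - lam i| / (√((1 - c₀) * lamd) * lamd) :=
          abs_inv_sqrt_sub_inv_sqrt_le hδ hlamd_pos (hmu_ge j) (hlam_ge i)
      _ = _ := by rw [hsqrt]; field_simp

/-- second and third inequalities of Proposition B.2. The
approximate-commutation bound transfers to square roots and inverse square roots
of the top eigenvalue matrices. -/
theorem stmt7 (c₀ : ℝ) (hc₀0 : 0 ≤ c₀) (hc₀1 : c₀ < 1) :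
    ∃ C : ℝ, 0 < C ∧
      ∀ (n d : ℕ) (hd : 0 < d) (hdn : d ≤ n)
        (UP : Matrix (Fin n) (Fin d) ℝ) (lam : Fin d → ℝ),
        UPᵀ * UP = 1 → (∀ k, 0 < lam k) → (∀ k l : Fin d, k ≤ l → lam l ≤ lam k) →
      ∀ lamd : ℝ, lamd = lam ⟨d - 1, Nat.sub_lt hd Nat.one_pos⟩ →
      ∀ P M : Matrix (Fin n) (Fin n) ℝ,
        P = UP * Matrix.diagonal lam * UPᵀ → Mᵀ = M →
        specNorm (M - P) ≤ c₀ * lamd →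
      ∀ (W : Matrix (Fin n) (Fin n) ℝ) (mu : Fin n → ℝ),
        Wᵀ * W = 1 → (∀ k l : Fin n, k ≤ l → mu l ≤ mu k) →
        M = W * Matrix.diagonal mu * Wᵀ →
      ∀ V : Matrix (Fin d) (Fin d) ℝ, Vᵀ * V = 1 →
        frobNorm (V * Matrix.diagonal
              (fun k : Fin d => Real.sqrt (mu (Fin.castLE hdn k)))
            - Matrix.diagonal (fun k => Real.sqrt (lam k)) * V)
          ≤ C * frobNorm (V * Matrix.diagonal (fun k : Fin d => mu (Fin.castLE hdn k))
              - Matrix.diagonal lam * V) / Real.sqrt lamd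
        ∧
        frobNorm (V * Matrix.diagonal
              (fun k : Fin d => (Real.sqrt (mu (Fin.castLE hdn k)))⁻¹)
            - Matrix.diagonal (fun k => (Real.sqrt (lam k))⁻¹) * V)
          ≤ C * frobNorm (V * Matrix.diagonal (fun k : Fin d => mu (Fin.castLE hdn k))
              - Matrix.diagonal lam * V) / (lamd * Real.sqrt lamd) :=
  stmt7_general c₀ hc₀1
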